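/- For every n ≥ 1, the cyclohedron γ-polynomials D_n(τ) = Σ_{i=0}^{⌊n/2⌋} (n!/(i!·i!·(n−2i)!))·τ^i satisfy the recurrence D_n(τ) = D_{n-1}(τ) + 2τ·Σ_{i=1}^{n-1} Γ_{i-1}(τ)·D_{n-i-1}(τ), where Γ_m(τ) = Σ_{i=0}^{⌊m/2⌋} (1/(i+1))·binom(2i,i)·binom(m,2i)·τ^i is the associahedron γ-polynomial, and D_0 = Γ_0 = 1. -/

import Mathlib

open Finset Polynomial

/-- The γ-polynomial of the associahedron `As^m`:
`Γ_m(τ) = Σ_{i=0}^{⌊m/2⌋} (1/(i+1))·binom(2i,i)·binom(m,2i)·τ^i`. -/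
noncomputable def gammaAs (m : ℕ) : Polynomial ℚ :=
  ∑ i ∈ Finset.range (m / 2 + 1),
    Polynomial.C ((1 / (i + 1 : ℚ)) * ((2 * i).choose i) * (m.choose (2 * i))) *
      Polynomial.X ^ i

/-- The γ-polynomial of the cyclohedron `Cy^n`:
`D_n(τ) = Σ_{i=0}^{⌊n/2⌋} (n!/(i!·i!·(n−2i)!))·τ^i`. -/
noncomputable def gammaCy (n : ℕ) : Polynomial ℚ :=
  ∑ i ∈ Finset.range (n / 2 + 1),
    Polynomial.C ((n.factorial : ℚ) /
      ((i.factorial : ℚ) * (i.factorial : ℚ) * ((n - 2 * i).factorial : ℚ))) *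
      Polynomial.X ^ i

/-!
Compare coefficients: `[τ^k] D_n = C(n, 2k) · C(2k, k)` and `[τ^a] Γ_m = Cat(a) · C(m, 2a)`.
In the coefficient of `τ^(k+1)` on the right, the sum over `i` of `C(i-1, 2a) · C(n-1-i, 2b)`
collapses to `C(n-1, 2k+1)` (Vandermonde's identity for upper indices), and Pascal's rule reduces
the recurrence to `C(2k+2, k+1) = 2 Σ_{a+b=k} Cat(a) · C(2b, b)`. For the generating functions
`c(x) = Σ Cat(n) xⁿ` and `B(x) = Σ C(2n, n) xⁿ` this says `B · (1 - 2xc) = 1`. It holds because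
`(1 - 2xc)² = 1 - 4x` by the Catalan equation `c = 1 + xc²`, while `B² · (1 - 4x) = 1` since
`(1 - 4x) B' = 2B` makes the derivative of `B² · (1 - 4x)` vanish; the constant terms fix the
sign.
-/

theorem Nat.sum_antidiagonal_choose_mul_choose (r : ℕ) :
    ∀ N s : ℕ,
      ∑ p ∈ antidiagonal N, p.1.choose r * p.2.choose s = (N + 1).choose (r + s + 1)
  | 0, s => by cases r <;> cases s <;> simp [Nat.choose_eq_zero_of_lt]
  | N + 1, 0 => by
    have ih := Nat.sum_antidiagonal_choose_mul_choose r N 0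
    simp only [Nat.choose_zero_right, mul_one, add_zero] at ih ⊢
    rw [Nat.sum_antidiagonal_succ', ih, Nat.choose_succ_succ (N + 1) r]
  | N + 1, s + 1 => by
    have ih := Nat.sum_antidiagonal_choose_mul_choose r N
    simp only [Nat.sum_antidiagonal_succ', Nat.choose_succ_succ' _ s, Nat.choose_zero_succ,
      mul_zero, zero_add, mul_add, sum_add_distrib, ih]
    rw [show r + (s + 1) + 1 = r + s + 1 + 1 by omega, Nat.choose_succ_succ' (N + 1)]

theorem Nat.sum_Icc_choose_pred_mul_choose_sub (N r s : ℕ) :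
    ∑ i ∈ Icc 1 N, (i - 1).choose r * (N - i).choose s = N.choose (r + s + 1) := by
  rcases N with _ | M
  · simp
  · rw [← Nat.sum_antidiagonal_choose_mul_choose, Nat.sum_antidiagonal_eq_sum_range_succ_mk,
      ← Finset.Ico_add_one_right_eq_Icc, Finset.sum_Ico_eq_sum_range]
    refine sum_congr rfl fun i _ => ?_
    congr 2 <;> omega

namespace PowerSeries

noncomputable def centralBinomSeries : ℚ⟦X⟧ := mk fun n => (n.centralBinom : ℚ)

@[simp]
theorem coeff_centralBinomSeries (n : ℕ) : coeff n centralBinomSeries = n.centralBinom := by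
  simp [centralBinomSeries]

@[simp]
theorem constantCoeff_centralBinomSeries : constantCoeff centralBinomSeries = 1 := by
  simp [← coeff_zero_eq_constantCoeff_apply]

theorem one_sub_four_X_mul_derivative_centralBinomSeries :
    (1 - 4 * X) * d⁄dX ℚ centralBinomSeries = 2 * centralBinomSeries := by
  ext n
  have h := congrArg (Nat.cast : ℕ → ℚ) (Nat.succ_mul_centralBinom_succ n)
  push_cast at h
  rcases n with _ | n <;>
  simp only [sub_mul, one_mul, mul_assoc, map_sub, ← map_ofNat C, coeff_C_mul, coeff_zero_X_mul,
    coeff_succ_X_mul, coeff_derivative, coeff_centralBinomSeries] <;>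
  push_cast at h ⊢ <;>
  linarith

theorem centralBinomSeries_sq_mul_one_sub_four_X :
    centralBinomSeries ^ 2 * (1 - 4 * X) = 1 := by
  have h_lin : d⁄dX ℚ (1 - 4 * X) = -4 := by
    simp [← map_ofNat C]
  apply derivative.ext
  · rw [Derivation.leibniz, Derivation.leibniz_pow, h_lin, derivative_one]
    simp only [smul_eq_mul, nsmul_eq_mul]
    linear_combination (2 * centralBinomSeries) * one_sub_four_X_mul_derivative_centralBinomSeries
  · simp

theorem one_sub_two_X_mul_sq_eq_one_sub_four_X {R : Type*} [CommRing R] {f : R⟦X⟧}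
    (hf : f ^ 2 * X + 1 = f) : (1 - 2 * X * f) ^ 2 = 1 - 4 * X := by
  linear_combination (4 * X) * hf

theorem centralBinomSeries_mul_one_sub_two_X_mul_catalanSeries :
    centralBinomSeries * (1 - 2 * X * catalanSeries.map (Nat.castRingHom ℚ)) = 1 := by
  have hC : (catalanSeries.map (Nat.castRingHom ℚ)) ^ 2 * X + 1 =
      catalanSeries.map (Nat.castRingHom ℚ) := by
    simpa using congrArg (map (Nat.castRingHom ℚ)) catalanSeries_sq_mul_X_add_one
  have h_sq :
      (centralBinomSeries * (1 - 2 * X * catalanSeries.map (Nat.castRingHom ℚ))) ^ 2 = 1 := by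
    rw [mul_pow, one_sub_two_X_mul_sq_eq_one_sub_four_X hC,
      centralBinomSeries_sq_mul_one_sub_four_X]
  refine (sq_eq_one_iff.mp h_sq).resolve_right fun h => ?_
  have h0 := congrArg constantCoeff h
  norm_num at h0

theorem _root_.Nat.centralBinom_succ_eq_two_mul_sum_catalan_mul_centralBinom (k : ℕ) :
    (k + 1).centralBinom = 2 * ∑ p ∈ antidiagonal k, catalan p.1 * p.2.centralBinom := by
  have h : centralBinomSeries =
      1 + 2 * (X * (catalanSeries.map (Nat.castRingHom ℚ) * centralBinomSeries)) := by
    linear_combination centralBinomSeries_mul_one_sub_two_X_mul_catalanSeries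
  have h_coeff := congrArg (coeff (k + 1)) h
  rw [map_add, coeff_one, if_neg k.succ_ne_zero, zero_add, ← map_ofNat C, coeff_C_mul,
    coeff_succ_X_mul, coeff_mul] at h_coeff
  simp only [coeff_map, catalanSeries_coeff, Nat.coe_castRingHom,
    coeff_centralBinomSeries] at h_coeff
  exact_mod_cast h_coeff

end PowerSeries

theorem Polynomial.coeff_sum_range_C_mul_X_pow {R : Type*} [Semiring R] (N : ℕ) (c : ℕ → R)
    (k : ℕ) : (∑ i ∈ range N, C (c i) * X ^ i).coeff k = if k < N then c k else 0 := by
  simp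

theorem coeff_gammaAs (m a : ℕ) : (gammaAs m).coeff a = catalan a * m.choose (2 * a) := by
  rw [gammaAs, coeff_sum_range_C_mul_X_pow]
  split_ifs with ha
  · have h := congrArg (Nat.cast : ℕ → ℚ) (succ_mul_catalan_eq_centralBinom a)
    rw [Nat.centralBinom_eq_two_mul_choose] at h
    push_cast at h
    rw [← h]
    field_simp
  · rw [Nat.choose_eq_zero_of_lt (by omega)]
    simp

theorem coeff_gammaCy (n k : ℕ) : (gammaCy n).coeff k = n.choose (2 * k) * k.centralBinom := by
  rw [gammaCy, coeff_sum_range_C_mul_X_pow]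
  split_ifs with hk
  · rw [Nat.centralBinom_eq_two_mul_choose, Nat.cast_choose ℚ (show 2 * k ≤ n by omega),
      Nat.cast_choose ℚ (show k ≤ 2 * k by omega), show 2 * k - k = k by omega]
    field_simp
  · rw [Nat.choose_eq_zero_of_lt (by omega)]
    simp

theorem coeff_sum_gammaAs_mul_gammaCy (N k : ℕ) :
    (∑ i ∈ Icc 1 N, gammaAs (i - 1) * gammaCy (N - i)).coeff k =
      N.choose (2 * k + 1) * ∑ p ∈ antidiagonal k, (catalan p.1 * p.2.centralBinom : ℚ) := by
  simp only [finsetSum_coeff, coeff_mul, coeff_gammaAs, coeff_gammaCy]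
  rw [sum_comm, mul_sum]
  refine sum_congr rfl fun p hp => ?_
  have h_deg : 2 * p.1 + 2 * p.2 + 1 = 2 * k + 1 := by
    rw [← mem_antidiagonal.mp hp]; ring
  rw [← h_deg, ← Nat.sum_Icc_choose_pred_mul_choose_sub, Nat.cast_sum, sum_mul]
  refine sum_congr rfl fun i _ => ?_
  push_cast
  ring

theorem gammaCy_recurrence (n : ℕ) (hn : 1 ≤ n) :
    gammaCy n =
      gammaCy (n - 1) +
        2 * Polynomial.X *
          ∑ i ∈ Finset.Icc 1 (n - 1), gammaAs (i - 1) * gammaCy (n - i - 1) := by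
  obtain ⟨N, rfl⟩ := Nat.exists_eq_add_of_le' hn
  have h_idx : ∀ i, N + 1 - i - 1 = N - i := fun i => by omega
  simp only [Nat.add_sub_cancel, h_idx]
  ext (_ | k)
  · simp [coeff_gammaCy]
  · rw [coeff_add, mul_assoc, coeff_ofNat_mul, coeff_X_mul, coeff_sum_gammaAs_mul_gammaCy,
      coeff_gammaCy, coeff_gammaCy, show 2 * (k + 1) = 2 * k + 1 + 1 by ring,
      Nat.choose_succ_succ', Nat.centralBinom_succ_eq_two_mul_sum_catalan_mul_centralBinom]
    push_cast
    ring
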